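/- Acharya's spectral criterion for balance: A signed simple graph Σ = (Γ, σ) is balanced if and only if its adjacency matrix A(Σ) has the same characteristic polynomial (equivalently, the same eigenvalues with multiplicities) as the adjacency matrix A(Γ) of the underlying unsigned graph. -/

import Mathlib

/-!
If `Σ` is balanced, every closed walk is positive (its sign is that of its bypass, a trivial
path), so signing each vertex by the sign of any walk to it from a fixed root of its component
gives `θ : V → {±1}` with `σ(uv) = θ(u) θ(v)`. Then `A(Σ) = D A(Γ) D` with `D = diag θ` and
`D² = 1`, and the characteristic polynomials agree.

Conversely, equal characteristic polynomials of the symmetric matrices `A(Σ)` and `A(Γ)` give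
equal eigenvalues, hence `tr A(Σ)ᵏ = tr A(Γ)ᵏ` for all `k`. But `tr A(Σ)ᵏ` counts closed walks
of length `k` with their signs, while `tr A(Γ)ᵏ` counts them without; a negative cycle of
length `k` makes the first strictly smaller.
-/

open SimpleGraph
open scoped Classical

/-- A signed simple graph `(G, σ)` is balanced if every cycle is positive,
i.e., the product of the signs of its edges is `+1`. -/
def IsBalanced {V : Type*} (G : SimpleGraph V) (σ : Sym2 V → ℤ) : Prop :=
  ∀ ⦃v : V⦄ (w : G.Walk v v), w.IsCycle → (w.edges.map σ).prod = 1

/-- The adjacency matrix of the signed simple graph `(G, σ)`: the `(i,j)` entry is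
`σ(v_i v_j)` if `v_i v_j` is an edge and `0` otherwise. -/
noncomputable def signedAdj {V : Type*} [Fintype V] (G : SimpleGraph V)
    (σ : Sym2 V → ℤ) : Matrix V V ℝ :=
  Matrix.of fun i j => if G.Adj i j then (σ s(i, j) : ℝ) else 0

open Matrix

namespace SimpleGraph.Walk

variable {V : Type*} {G : SimpleGraph V} (σ : Sym2 V → ℤ)

def sign {u v : V} (w : G.Walk u v) : ℤ := (w.edges.map σ).prod

@[simp]
lemma sign_nil {u : V} : (nil : G.Walk u u).sign σ = 1 := rfl

@[simp]
lemma sign_cons {u v w : V} (h : G.Adj u v) (p : G.Walk v w) :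
    (cons h p).sign σ = σ s(u, v) * p.sign σ := by
  simp [sign]

@[simp]
lemma sign_append {u v w : V} (p : G.Walk u v) (q : G.Walk v w) :
    (p.append q).sign σ = p.sign σ * q.sign σ := by
  simp [sign]

@[simp]
lemma sign_reverse {u v : V} (p : G.Walk u v) : p.reverse.sign σ = p.sign σ := by
  simp [sign, List.prod_reverse]

@[simp]
lemma sign_copy {u v u' v' : V} (p : G.Walk u v) (hu : u = u') (hv : v = v') :
    (p.copy hu hv).sign σ = p.sign σ := by
  subst hu hv; rfl

lemma isUnit_sign (hσ : ∀ e ∈ G.edgeSet, IsUnit (σ e)) {u v : V} (w : G.Walk u v) :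
    IsUnit (w.sign σ) := by
  induction w with
  | nil => simp
  | cons h p ih => simpa using (hσ _ h).mul ih

lemma sign_le_one (hσ : ∀ e ∈ G.edgeSet, IsUnit (σ e)) {u v : V} (w : G.Walk u v) :
    w.sign σ ≤ 1 := by
  rcases Int.isUnit_iff.mp (w.isUnit_sign σ hσ) with h | h <;> simp [h]

end SimpleGraph.Walk

namespace IsBalanced

variable {V : Type*} {G : SimpleGraph V} {σ : Sym2 V → ℤ}
  (hb : IsBalanced G σ) (hσ : ∀ e ∈ G.edgeSet, IsUnit (σ e))
include hb hσ

lemma sign_cons_eq_one_of_isPath {u v : V} (h : G.Adj u v) {p : G.Walk v u} (hp : p.IsPath) :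
    (Walk.cons h p).sign σ = 1 := by
  by_cases he : s(u, v) ∈ p.edges
  · rw [hp.eq_adj_toWalk_of_mem_edges (Sym2.eq_swap ▸ he)]
    simpa [Sym2.eq_swap] using Int.isUnit_mul_self (hσ _ h)
  · exact hb _ ((Walk.cons_isCycle_iff p h).mpr ⟨hp, he⟩)

lemma sign_bypass {u v : V} (w : G.Walk u v) : w.bypass.sign σ = w.sign σ := by
  induction w with
  | nil => rfl
  | @cons u v _ h p ih =>
    rw [Walk.bypass]
    split_ifs with hu
    · -- the bypass discards the closed walk `cons h (takeUntil u)`, which is positive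
      have hc := hb.sign_cons_eq_one_of_isPath hσ h (p.bypass_isPath.takeUntil hu)
      have hsplit := congrArg (Walk.sign σ) (p.bypass.take_spec hu)
      rw [Walk.sign_append] at hsplit
      rw [Walk.sign_cons] at hc
      rw [Walk.sign_cons, ← ih, ← hsplit, ← mul_assoc, hc, one_mul]
    · simp [ih]

lemma sign_eq_one {u : V} (w : G.Walk u u) : w.sign σ = 1 := by
  rw [← hb.sign_bypass hσ, Walk.eq_nil_iff_nil.mpr (Walk.isPath_iff_nil.mp w.bypass_isPath),
    Walk.sign_nil]

lemma sign_eq_sign {u v : V} (w₁ w₂ : G.Walk u v) : w₁.sign σ = w₂.sign σ := by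
  have h := hb.sign_eq_one hσ (w₁.append w₂.reverse)
  rw [Walk.sign_append, Walk.sign_reverse] at h
  calc w₁.sign σ = w₁.sign σ * (w₂.sign σ * w₂.sign σ) := by
        rw [Int.isUnit_mul_self (w₂.isUnit_sign σ hσ), mul_one]
    _ = w₂.sign σ := by rw [← mul_assoc, h, one_mul]

lemma exists_switching : ∃ θ : V → ℤ, (∀ v, IsUnit (θ v)) ∧
    ∀ u v, G.Adj u v → σ s(u, v) = θ u * θ v := by
  have hroot (v : V) : G.Reachable (G.connectedComponentMk v).out v :=
    ConnectedComponent.exact (G.connectedComponentMk v).out_eq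
  let θ (v : V) : ℤ := (hroot v).some.sign σ
  have hθ (v : V) : IsUnit (θ v) := Walk.isUnit_sign σ hσ _
  refine ⟨θ, hθ, fun u v h => ?_⟩
  have hsame : (G.connectedComponentMk u).out = (G.connectedComponentMk v).out := by
    rw [ConnectedComponent.sound h.reachable]
  have hv : θ u * σ s(u, v) = θ v := by
    simpa using hb.sign_eq_sign hσ (((hroot u).some.copy hsame rfl).append (Walk.cons h .nil))
      (hroot v).some
  linear_combination θ u * hv - σ s(u, v) * Int.isUnit_mul_self (hθ u)

end IsBalanced

namespace Matrix.IsHermitian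

variable {𝕜 n : Type*} [RCLike 𝕜] [Fintype n] [DecidableEq n] {A B : Matrix n n 𝕜}

lemma trace_pow_eq_sum_eigenvalues_pow (hA : A.IsHermitian) (k : ℕ) :
    (A ^ k).trace = ∑ i, (hA.eigenvalues i : 𝕜) ^ k := by
  conv_lhs => rw [hA.spectral_theorem, ← map_pow, Unitary.conjStarAlgAut_apply,
    trace_mul_cycle, Unitary.coe_star_mul_self, one_mul, diagonal_pow, trace_diagonal]
  rfl

lemma trace_pow_eq_of_charpoly_eq (hA : A.IsHermitian) (hB : B.IsHermitian)
    (h : A.charpoly = B.charpoly) (k : ℕ) : (A ^ k).trace = (B ^ k).trace := by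
  rw [hA.trace_pow_eq_sum_eigenvalues_pow, hB.trace_pow_eq_sum_eigenvalues_pow,
    (eigenvalues_eq_eigenvalues_iff hA hB).mpr h]

end Matrix.IsHermitian

section SignedAdjacency

variable {V : Type*} [Fintype V] [DecidableEq V] (G : SimpleGraph V) [DecidableRel G.Adj]
  (σ : Sym2 V → ℤ)

omit [DecidableEq V] in
lemma signedAdj_apply (u v : V) :
    signedAdj G σ u v = if G.Adj u v then (σ s(u, v) : ℝ) else 0 := by
  simp [signedAdj]

omit [DecidableEq V] in
lemma signedAdj_isHermitian : (signedAdj G σ).IsHermitian := by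
  refine isHermitian_iff_isSymm.mpr (IsSymm.ext fun i j => ?_)
  simp [signedAdj_apply, G.adj_comm, Sym2.eq_swap]

lemma signedAdj_eq_diagonal_mul_adjMatrix_mul_diagonal (θ : V → ℤ)
    (hθ : ∀ u v, G.Adj u v → σ s(u, v) = θ u * θ v) :
    signedAdj G σ =
      diagonal (fun v => (θ v : ℝ)) * G.adjMatrix ℝ * diagonal (fun v => (θ v : ℝ)) := by
  ext u v
  rw [mul_diagonal, diagonal_mul]
  by_cases h : G.Adj u v <;> simp [signedAdj_apply, h, hθ]

lemma charpoly_signedAdj_eq_of_switching (θ : V → ℤ) (hθ₁ : ∀ v, IsUnit (θ v))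
    (hθ : ∀ u v, G.Adj u v → σ s(u, v) = θ u * θ v) :
    (signedAdj G σ).charpoly = (G.adjMatrix ℝ).charpoly := by
  have hD : diagonal (fun v => (θ v : ℝ)) * diagonal (fun v => (θ v : ℝ)) = 1 := by
    simp [diagonal_mul_diagonal, ← Int.cast_mul, Int.isUnit_mul_self (hθ₁ _)]
  rw [signedAdj_eq_diagonal_mul_adjMatrix_mul_diagonal G σ θ hθ, charpoly_mul_comm, ← mul_assoc,
    hD, one_mul]

lemma signedAdj_pow_apply (n : ℕ) (u v : V) :
    (signedAdj G σ ^ n) u v = ∑ p ∈ G.finsetWalkLength n u v, (p.sign σ : ℝ) := by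
  induction n generalizing u v with
  | zero => obtain rfl | h := eq_or_ne u v <;> simp [finsetWalkLength, one_apply, *]
  | succ n ih =>
    rw [pow_succ', mul_apply, finsetWalkLength, Finset.sum_biUnion]
    · simp only [signedAdj_apply, ite_mul, zero_mul, Finset.sum_ite, Finset.sum_const_zero,
        add_zero]
      rw [Finset.sum_subtype _ (p := fun x => G.Adj u x) (by simp)]
      refine Finset.sum_congr rfl fun x _ => ?_
      rw [ih, Finset.sum_map, Finset.mul_sum]
      refine Finset.sum_congr rfl fun p _ => ?_
      rw [← Int.cast_mul, ← Walk.sign_cons]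
      rfl
    · rintro ⟨x, hx⟩ - ⟨y, hy⟩ - hxy
      simp only [Function.onFun, Finset.disjoint_left, Finset.mem_map]
      rintro _ ⟨p, -, rfl⟩ ⟨q, -, hq⟩
      cases hq
      exact hxy rfl

variable {G σ} (hσ : ∀ e ∈ G.edgeSet, IsUnit (σ e))
include hσ

lemma signedAdj_pow_apply_le (n : ℕ) (u v : V) :
    (signedAdj G σ ^ n) u v ≤ (G.adjMatrix ℝ ^ n) u v := by
  rw [signedAdj_pow_apply, adjMatrix_pow_apply_eq_card_walk, card_set_walk_length_eq,
    Finset.card_eq_sum_ones, Nat.cast_sum, Nat.cast_one]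
  exact Finset.sum_le_sum fun p _ => by exact_mod_cast p.sign_le_one σ hσ

lemma signedAdj_pow_apply_lt {u v : V} (w : G.Walk u v) (hw : w.sign σ = -1) :
    (signedAdj G σ ^ w.length) u v < (G.adjMatrix ℝ ^ w.length) u v := by
  rw [signedAdj_pow_apply, adjMatrix_pow_apply_eq_card_walk, card_set_walk_length_eq,
    Finset.card_eq_sum_ones, Nat.cast_sum, Nat.cast_one]
  refine Finset.sum_lt_sum (fun p _ => by exact_mod_cast p.sign_le_one σ hσ)
    ⟨w, mem_finsetWalkLength_iff.mpr rfl, by rw [hw]; norm_num⟩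

lemma trace_signedAdj_pow_lt {v : V} (w : G.Walk v v) (hw : w.sign σ = -1) :
    (signedAdj G σ ^ w.length).trace < (G.adjMatrix ℝ ^ w.length).trace :=
  Finset.sum_lt_sum (fun u _ => signedAdj_pow_apply_le hσ _ u u)
    ⟨v, Finset.mem_univ v, signedAdj_pow_apply_lt hσ w hw⟩

end SignedAdjacency

/-- Acharya's spectral criterion for balance: `Σ = (G, σ)` is balanced iff `A(Σ)` has
the same characteristic polynomial (hence the same eigenvalues with multiplicities) as
the adjacency matrix of the underlying unsigned graph. -/
theorem acharya_balance_criterion {V : Type*} [Fintype V] [DecidableEq V]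
    (G : SimpleGraph V) [DecidableRel G.Adj]
    (σ : Sym2 V → ℤ) (hσ : ∀ e ∈ G.edgeSet, σ e = 1 ∨ σ e = -1) :
    IsBalanced G σ ↔ (signedAdj G σ).charpoly = (G.adjMatrix ℝ).charpoly := by
  have hσ' : ∀ e ∈ G.edgeSet, IsUnit (σ e) := fun e he => Int.isUnit_iff.mpr (hσ e he)
  constructor
  · intro hb
    obtain ⟨θ, hθ₁, hθ⟩ := hb.exists_switching hσ'
    exact charpoly_signedAdj_eq_of_switching G σ θ hθ₁ hθ
  · intro hchar v w hw
    by_contra hne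
    have hneg : w.sign σ = -1 := (Int.isUnit_iff.mp (w.isUnit_sign σ hσ')).resolve_left hne
    have htrace := (signedAdj_isHermitian G σ).trace_pow_eq_of_charpoly_eq
      (isHermitian_iff_isSymm.mpr G.isSymm_adjMatrix) hchar w.length
    exact (trace_signedAdj_pow_lt hσ' w hneg).ne htrace
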